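/- arXiv:2512.07592 — 2 statements merged into one kernel-verified Lean document; each statement's English description precedes it below -/
import Mathlib

section
/- Let G=(V,E) be a finite simple connected chordal graph. Then every maximal utter clique [W,F] of G satisfies F = E(W) ∪ δ(W); in particular no edge of F has both endpoints outside W. -/
open Finset
open scoped Classical

noncomputable section

variable {V : Type*} [Fintype V]

/-- A co-2-plex: a set of vertices inducing a subgraph of maximum degree at most 1. -/
def IsCo2Plex {α : Type*} (G : SimpleGraph α) (S : Finset α) : Prop :=
  ∀ u ∈ S, (S.filter fun v => G.Adj u v).card ≤ 1

/-- Incidence vector of a vertex set. -/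
def chiV {α : Type*} (S : Finset α) : α → ℝ := fun v => if v ∈ S then 1 else 0

/-- Incidence vector (on edges) of the set of edges with both endpoints in `S`. -/
def chiE {α : Type*} (G : SimpleGraph α) (S : Finset α) : G.edgeSet → ℝ :=
  fun e => if ∀ v ∈ (e : Sym2 α), v ∈ S then 1 else 0

/-- The co-2-plex polytope. -/
def co2PlexPolytope (G : SimpleGraph V) : Set (V → ℝ) :=
  convexHull ℝ {x | ∃ S : Finset V, IsCo2Plex G S ∧ x = chiV S}

/-- The extended co-2-plex polytope. -/
def co2PlexPolytopeExt (G : SimpleGraph V) : Set ((V → ℝ) × (G.edgeSet → ℝ)) :=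
  convexHull ℝ {p | ∃ S : Finset V, IsCo2Plex G S ∧ p = (chiV S, chiE G S)}

/-- δ(v): edges incident to `v`. -/
def inc (G : SimpleGraph V) (v : V) : Finset G.edgeSet :=
  univ.filter fun e => v ∈ (e : Sym2 V)

/-- E(W): edges with both endpoints in W. -/
def edgesIn (G : SimpleGraph V) (W : Finset V) : Finset G.edgeSet :=
  univ.filter fun e => ∀ v ∈ (e : Sym2 V), v ∈ W

/-- E(V \ W): edges with both endpoints outside W. -/
def edgesOut (G : SimpleGraph V) (W : Finset V) : Finset G.edgeSet :=
  univ.filter fun e => ∀ v ∈ (e : Sym2 V), v ∉ W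

/-- δ(W): edges with exactly one endpoint in W. -/
def edgesCut (G : SimpleGraph V) (W : Finset V) : Finset G.edgeSet :=
  univ.filter fun e => (∃ v ∈ (e : Sym2 V), v ∈ W) ∧ ∃ v ∈ (e : Sym2 V), v ∉ W

/-- The utter graph of `G`. -/
def utter (G : SimpleGraph V) : SimpleGraph (V ⊕ G.edgeSet) where
  Adj a b :=
    match a, b with
    | Sum.inl u, Sum.inl v => G.Adj u v
    | Sum.inl w, Sum.inr e => w ∈ (e : Sym2 V) ∨ ∃ z ∈ (e : Sym2 V), G.Adj w z
    | Sum.inr e, Sum.inl w => w ∈ (e : Sym2 V) ∨ ∃ z ∈ (e : Sym2 V), G.Adj w z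
    | Sum.inr e, Sum.inr f =>
        e ≠ f ∧ ((∃ v, v ∈ (e : Sym2 V) ∧ v ∈ (f : Sym2 V)) ∨
          ∃ a ∈ (e : Sym2 V), ∃ b ∈ (f : Sym2 V), G.Adj a b)
  symm := by
    constructor
    rintro (u | e) (v | f) h
    · exact h.symm
    · exact h
    · exact h
    · obtain ⟨hne, h⟩ := h
      refine ⟨hne.symm, ?_⟩
      rcases h with ⟨v, hv1, hv2⟩ | ⟨a, ha, b, hb, hab⟩
      · exact Or.inl ⟨v, hv2, hv1⟩
      · exact Or.inr ⟨b, hb, a, ha, hab.symm⟩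
  loopless := by
    constructor
    rintro (u | e) h
    · exact G.loopless.irrefl u h
    · exact h.1 rfl

/-- An utter clique: a pair [W, F] whose union is a clique of the utter graph. -/
def IsUtterClique (G : SimpleGraph V) (W : Finset V) (F : Finset G.edgeSet) : Prop :=
  (utter G).IsClique (Sum.inl '' (W : Set V) ∪ Sum.inr '' (F : Set G.edgeSet))

/-- A maximal utter clique. -/
def IsMaxUtterClique (G : SimpleGraph V) (W : Finset V) (F : Finset G.edgeSet) : Prop :=
  IsUtterClique G W F ∧
    (∀ v ∉ W, ¬ IsUtterClique G (insert v W) F) ∧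
    (∀ e ∉ F, ¬ IsUtterClique G W (insert e F))

/-- The contraction G/F: vertices are the connected components of the spanning
subgraph (V, F); two components are adjacent iff some edge of `G` joins them. -/
def contract {α : Type*} (G : SimpleGraph α) (F : Set (Sym2 α)) :
    SimpleGraph (SimpleGraph.fromEdgeSet F).ConnectedComponent where
  Adj c d := c ≠ d ∧ ∃ u v, G.Adj u v ∧
      (SimpleGraph.fromEdgeSet F).connectedComponentMk u = c ∧
      (SimpleGraph.fromEdgeSet F).connectedComponentMk v = d
  symm := by
    constructor
    rintro c d ⟨hne, u, v, h, hu, hv⟩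
    exact ⟨hne.symm, v, u, h.symm, hv, hu⟩
  loopless := by
    constructor
    rintro c ⟨hne, _⟩
    exact hne rfl

/-- A graph is perfect if every induced subgraph has chromatic number equal to
its clique number. -/
def IsPerfect {α : Type*} (G : SimpleGraph α) : Prop :=
  ∀ s : Set α, (G.induce s).chromaticNumber = ((G.induce s).cliqueNum : ℕ∞)

/-- A graph is contraction perfect if all its contractions (by edge subsets) are perfect. -/
def ContractionPerfect (G : SimpleGraph V) : Prop :=
  ∀ F : Set (Sym2 V), F ⊆ G.edgeSet → IsPerfect (contract G F)

/-- Chordal: no induced cycle of length at least 4. -/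
def Chordal (G : SimpleGraph V) : Prop :=
  ∀ n, 4 ≤ n → IsEmpty (SimpleGraph.cycleGraph n ↪g G)

/-- Maximal clique (as a finset). -/
def IsMaxCliqueF (G : SimpleGraph V) (K : Finset V) : Prop :=
  G.IsClique (K : Set V) ∧ ∀ K' : Finset V, G.IsClique (K' : Set V) → K ⊆ K' → K = K'

/-- A 2-plex: every vertex of the induced subgraph has degree at least |K| - 2 in it. -/
def Is2Plex (G : SimpleGraph V) (K : Finset V) : Prop :=
  ∀ v ∈ K, K.card - 2 ≤ (K.filter fun u => G.Adj v u).card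

/-- α₂(G[W]): the maximum cardinality of a co-2-plex contained in `W`. -/
def co2plexNumOn (G : SimpleGraph V) (W : Finset V) : ℕ :=
  Finset.univ.sup fun S : Finset V => if S ⊆ W ∧ IsCo2Plex G S then S.card else 0

/-- Facet-defining inequality of a full-dimensional polytope in ℝ^α: a valid
inequality whose tight points contain `card α` affinely independent points. -/
def IsFacet {α : Type*} [Fintype α] (P : Set (α → ℝ)) (a : α → ℝ) (c : ℝ) : Prop :=
  (∀ x ∈ P, ∑ v, a v * x v ≤ c) ∧
  ∃ f : Fin (Fintype.card α) → (α → ℝ),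
    AffineIndependent ℝ f ∧ ∀ i, f i ∈ P ∧ ∑ v, a v * f i v = c

/-- The polytope T(G) given by bounds and the star inequalities. -/
def TPoly (G : SimpleGraph V) [DecidableRel G.Adj] : Set (V → ℝ) :=
  {x | (∀ v, 0 ≤ x v ∧ x v ≤ 1) ∧
    ∀ (w : V), ∀ W ⊆ G.neighborFinset w,
      ∑ v ∈ W, x v + ((W.card : ℝ) - 1) * x w ≤ (W.card : ℝ)}

/-- Total dual integrality of the system `A x ≤ b`. -/
def IsTDI {ι κ : Type*} [Fintype ι] [Fintype κ] (A : ι → κ → ℝ) (b : ι → ℝ) : Prop :=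
  ∀ c : κ → ℤ, ∀ m : ℝ,
    IsGreatest {t | ∃ x : κ → ℝ, (∀ i, ∑ j, A i j * x j ≤ b i) ∧ t = ∑ j, (c j : ℝ) * x j} m →
    ∃ π : ι → ℤ, (∀ i, 0 ≤ π i) ∧ (∀ j, ∑ i, (π i : ℝ) * A i j = (c j : ℝ)) ∧
      ∑ i, (π i : ℝ) * b i = m


/-!
A vertex or an edge of `G` is a connected set of one or two vertices, and two elements of the
utter graph are adjacent iff these sets meet or are joined by an edge of `G`. A vertex of `W` is
adjacent to every other member of the clique, so by maximality every edge at a vertex of `W`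
lies in `F`. Conversely, if an edge `uv ∈ F` had no endpoint in `W`, maximality would give
members `x`, `y` of the clique missing the closed neighbourhoods of `u` and of `v`; being adjacent
to `uv`, `x` meets `N(v)` and `y` meets `N(u)`, and as `x` and `y` are adjacent this yields a path
from `N(u)` to `N(v)` avoiding the common neighbours of `u` and `v`. In a chordal graph no such
path exists: a shortest one would close up with `uv` into an induced cycle of length at least 4.
-/

section Graph

variable {α : Type*} {G : SimpleGraph α}

theorem Chordal.false_of_chordless_cycle (hG : Chordal G) {n : ℕ} (hn : 4 ≤ n) (f : ℕ → α)
    (hinj : ∀ i j, i < j → j < n → f i ≠ f j)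
    (hadj : ∀ i j, i < j → j < n → (G.Adj (f i) (f j) ↔ j = i + 1 ∨ i = 0 ∧ j = n - 1)) :
    False := by
  refine (hG n hn).false ⟨⟨fun i => f i, fun i j hij => ?_⟩, fun {i j} => ?_⟩
  · by_contra hne
    rcases lt_or_gt_of_ne (Fin.val_ne_of_ne hne) with h | h
    · exact hinj _ _ h j.2 hij
    · exact hinj _ _ h i.2 hij.symm
  · change G.Adj (f i) (f j) ↔ _
    rw [SimpleGraph.cycleGraph_adj']
    rcases lt_trichotomy i.val j.val with h | h | h
    · rw [hadj _ _ h j.2, Fin.coe_sub_iff_lt.mpr h, Fin.coe_sub_iff_le.mpr h.le]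
      omega
    · obtain rfl := Fin.ext h
      simp [Fin.coe_sub_iff_le.mpr le_rfl]
    · rw [G.adj_comm, hadj _ _ h i.2, Fin.coe_sub_iff_lt.mpr h, Fin.coe_sub_iff_le.mpr h.le]
      omega

def IsWalkThrough (G : SimpleGraph α) (S : Set α) (f : ℕ → α) (k : ℕ) : Prop :=
  (∀ i < k, G.Adj (f i) (f (i + 1))) ∧ ∀ i, 0 < i → i < k → f i ∈ S

theorem IsWalkThrough.shortcut {S : Set α} {f : ℕ → α} {k i d : ℕ}
    (hf : IsWalkThrough G S f k) (hk : i + 1 + d ≤ k) (hadj : G.Adj (f i) (f (i + 1 + d))) :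
    IsWalkThrough G S (fun m => if m ≤ i then f m else f (m + d)) (k - d) := by
  refine ⟨fun m hm => ?_, fun m hm0 hm => ?_⟩
  · rcases lt_trichotomy m i with h | rfl | h
    · simpa [h.le, Nat.succ_le_of_lt h] using hf.1 m (by omega)
    · simpa [Nat.add_right_comm] using hadj
    · simpa [h.not_ge, (Nat.lt_succ_of_lt h).not_ge, Nat.add_right_comm] using
        hf.1 (m + d) (by omega)
  · dsimp only
    split_ifs with h
    · exact hf.2 m hm0 (by omega)
    · exact hf.2 (m + d) (by omega) (by omega)

-- A shortest such walk has no chord and closes up with `uv` to an induced cycle of length ≥ 4.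
theorem Chordal.false_of_walkThrough (hG : Chordal G) {u v : α} (huv : G.Adj u v) {S : Set α}
    (hS : ∀ x ∈ S, x ∉ G.commonNeighbors u v) (hu : u ∉ S) (hv : v ∉ S) :
    ∀ k (f : ℕ → α), 2 ≤ k → f 0 = u → f k = v → IsWalkThrough G S f k → False := by
  intro k
  induction k using Nat.strong_induction_on with
  | _ k ih =>
  intro f hk hf0 hfk hf
  by_cases hshort : ∃ i j, i + 2 ≤ j ∧ j ≤ k ∧ ¬(i = 0 ∧ j = k) ∧ (f i = f j ∨ G.Adj (f i) (f j))
  · obtain ⟨i, j, hij, hjk, hend, heq | hadj⟩ := hshort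
    · have hi : 0 < i := by
        refine Nat.pos_of_ne_zero fun hi => hu ?_
        rw [← hf0, ← hi, heq]
        exact hf.2 j (by omega) (by omega)
      have hj : j < k := by
        refine lt_of_le_of_ne hjk fun hj => hv ?_
        rw [← hfk, ← hj, ← heq]
        exact hf.2 i hi (by omega)
      refine ih (k - (j - i)) (by omega) _ (by omega) (by simp [hf0]) ?_
        (hf.shortcut (i := i) (d := j - i) (by omega) ?_)
      · simp [show ¬k - (j - i) ≤ i by omega, show k - (j - i) + (j - i) = k by omega, hfk]
      · rw [heq, show i + 1 + (j - i) = j + 1 by omega]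
        exact hf.1 j hj
    · refine ih (k - (j - i - 1)) (by omega) _ (by omega) (by simp [hf0]) ?_
        (hf.shortcut (i := i) (d := j - i - 1) (by omega) ?_)
      · simp [show ¬k - (j - i - 1) ≤ i by omega, show k - (j - i - 1) + (j - i - 1) = k by omega,
          hfk]
      · rwa [show i + 1 + (j - i - 1) = j by omega]
  · push Not at hshort
    have hk3 : 3 ≤ k := by
      by_contra
      obtain rfl : k = 2 := by omega
      refine hS (f 1) (hf.2 1 one_pos one_lt_two) ⟨?_, ?_⟩
      · simpa [hf0] using hf.1 0 two_pos
      · simpa [hfk] using (hf.1 1 one_lt_two).symm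
    refine hG.false_of_chordless_cycle (n := k + 1) (by omega) f (fun i j hij hj => ?_)
      (fun i j hij hj => ?_)
    · intro heq
      by_cases hsucc : j = i + 1
      · subst hsucc
        exact (hf.1 i (by omega)).ne heq
      by_cases hend : i = 0 ∧ j = k
      · obtain ⟨rfl, rfl⟩ := hend
        exact huv.ne (hf0 ▸ hfk ▸ heq)
      exact (hshort i j (by omega) (by omega) (fun hi => by omega)).1 heq
    · refine ⟨fun h => ?_, ?_⟩
      · by_contra hc
        exact (hshort i j (by omega) (by omega) (fun hi => by omega)).2 h
      · rintro (rfl | ⟨rfl, rfl⟩)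
        · exact hf.1 i (by omega)
        · simpa [hf0, hfk] using huv

theorem Chordal.not_reachable_induce (hG : Chordal G) {u v : α} (huv : G.Adj u v) {S : Set α}
    (hS : ∀ x ∈ S, x ∉ G.commonNeighbors u v) (hu : u ∉ S) (hv : v ∉ S)
    {a b : S} (ha : G.Adj u a) (hb : G.Adj b v) : ¬(G.induce S).Reachable a b := by
  rintro ⟨w⟩
  refine hG.false_of_walkThrough huv hS hu hv (w.length + 2)
    (fun m => if m = 0 then u else if m ≤ w.length + 1 then w.getVert (m - 1) else v)
    (by omega) (by simp) (by simp) ⟨fun m hm => ?_, fun m hm0 hm => ?_⟩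
  · rcases Nat.lt_or_ge w.length m with hlen | hlen
    · obtain rfl : m = w.length + 1 := by omega
      simpa using hb
    rcases m with _ | m
    · simpa using ha
    · simpa [Nat.le_of_succ_le hlen, hlen] using
        SimpleGraph.induce_adj.mp (w.adj_getVert_succ hlen)
  · simp [hm0.ne', show m ≤ w.length + 1 by omega]

def utterSupport (G : SimpleGraph α) : α ⊕ G.edgeSet → Set α
  | .inl v => {v}
  | .inr e => {x | x ∈ (e : Sym2 α)}

theorem utter_adj_iff {x y : α ⊕ G.edgeSet} :
    (utter G).Adj x y ↔
      x ≠ y ∧ ∃ a ∈ utterSupport G x, ∃ b ∈ utterSupport G y, a = b ∨ G.Adj a b := by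
  rcases x with u | e <;> rcases y with v | f <;>
    simp only [utter, utterSupport, ne_eq, Sum.inl.injEq, Sum.inr.injEq, reduceCtorEq,
      not_false_eq_true, true_and, Set.mem_singleton_iff, Set.mem_ofPred_eq, exists_eq_left]
  · exact ⟨fun h => ⟨h.ne, Or.inr h⟩, fun h => h.2.resolve_left h.1⟩
  · grind [SimpleGraph.adj_comm]
  · grind [SimpleGraph.adj_comm]
  · grind [SimpleGraph.adj_comm]

theorem eq_or_adj_of_mem_utterSupport {x : α ⊕ G.edgeSet} {a b : α}
    (ha : a ∈ utterSupport G x) (hb : b ∈ utterSupport G x) : a = b ∨ G.Adj a b := by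
  rcases x with v | ⟨e, he⟩
  · exact Or.inl (ha.trans hb.symm)
  · induction e using Sym2.ind with
    | _ p q =>
    simp only [utterSupport, Set.mem_ofPred_eq, Sym2.mem_iff] at ha hb
    rw [SimpleGraph.mem_edgeSet] at he
    rcases ha with rfl | rfl <;> rcases hb with rfl | rfl <;> simp [he, he.symm]

theorem utter_adj_of_subset {x y z : α ⊕ G.edgeSet} (hyx : (utter G).Adj y x)
    (hyz : utterSupport G y ⊆ utterSupport G z) (hzx : z ≠ x) : (utter G).Adj z x := by
  obtain ⟨-, a, ha, b, hb, hab⟩ := utter_adj_iff.mp hyx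
  exact utter_adj_iff.mpr ⟨hzx, a, hyz ha, b, hb, hab⟩

theorem reachable_induce_of_eq_or_adj {S : Set α} {a b : S} (h : (a : α) = b ∨ G.Adj a b) :
    (G.induce S).Reachable a b := by
  rcases h with h | h
  · rw [Subtype.ext h]
  · exact (SimpleGraph.induce_adj.mpr h).reachable

end Graph

namespace IsMaxUtterClique

variable {α : Type*} {G : SimpleGraph α} {W : Finset α} {F : Finset G.edgeSet}

-- `u` cannot be added to `W`, so some member `x` of the clique misses the closed neighbourhood of
-- `u`; since `x` is adjacent to `uv` in the utter graph, it meets the neighbourhood of `v`.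
theorem exists_obstacle (h : IsMaxUtterClique G W F) {e : G.edgeSet} (he : e ∈ F) {u v : α}
    (huv : (e : Sym2 α) = s(u, v)) (hu : u ∉ W) :
    ∃ x ∈ Sum.inl '' (W : Set α) ∪ Sum.inr '' (F : Set G.edgeSet),
      (∀ z ∈ utterSupport G x, z ≠ u ∧ ¬G.Adj u z) ∧ ∃ a ∈ utterSupport G x, G.Adj v a := by
  have hins := h.2.1 u hu
  rw [IsUtterClique, coe_insert, Set.image_insert_eq, Set.insert_union,
    SimpleGraph.isClique_insert] at hins
  push Not at hins
  obtain ⟨x, hxK, hux, hnadj⟩ := hins h.1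
  have hfar : ∀ z ∈ utterSupport G x, z ≠ u ∧ ¬G.Adj u z := by
    intro z hz
    have hnear := mt (utter_adj_iff.mpr ∘ And.intro hux) hnadj
    exact ⟨fun hzu => hnear ⟨u, rfl, z, hz, Or.inl hzu.symm⟩,
      fun hadj => hnear ⟨u, rfl, z, hz, Or.inr hadj⟩⟩
  refine ⟨x, hxK, hfar, ?_⟩
  have heK : Sum.inr e ∈ Sum.inl '' (W : Set α) ∪ Sum.inr '' (F : Set G.edgeSet) :=
    Or.inr ⟨e, he, rfl⟩
  have hxe : x ≠ Sum.inr e := by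
    rintro rfl
    exact (hfar u (by simp [utterSupport, huv])).1 rfl
  obtain ⟨-, a, ha, b, hb, hab⟩ := utter_adj_iff.mp (h.1 hxK heK hxe)
  simp only [utterSupport, huv, Set.mem_ofPred_eq, Sym2.mem_iff] at hb
  have huv' : G.Adj u v := by simpa [huv] using e.2
  rcases hb with rfl | rfl
  · rcases hab with rfl | hab
    · exact absurd rfl (hfar a ha).1
    · exact absurd hab.symm (hfar a ha).2
  · rcases hab with rfl | hab
    · exact absurd huv' (hfar a ha).2
    · exact ⟨a, ha, hab.symm⟩

theorem exists_endpoint_mem_of_mem (hG : Chordal G) (h : IsMaxUtterClique G W F) {e : G.edgeSet}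
    (he : e ∈ F) : ∃ w ∈ (e : Sym2 α), w ∈ W := by
  by_contra hno
  push Not at hno
  obtain ⟨u, v, huv⟩ : ∃ u v, (e : Sym2 α) = s(u, v) := Sym2.exists.mp ⟨e, rfl⟩
  have hadj : G.Adj u v := by simpa [huv] using e.2
  obtain ⟨x, hxK, hxu, a, hax, hva⟩ :=
    h.exists_obstacle he huv (hno u (by simp [huv]))
  obtain ⟨y, hyK, hyv, b, hby, hub⟩ :=
    h.exists_obstacle he (huv.trans Sym2.eq_swap) (hno v (by simp [huv]))
  have hxy : x ≠ y := by
    rintro rfl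
    exact (hyv a hax).2 hva
  obtain ⟨-, p, hpx, q, hqy, hpq⟩ := utter_adj_iff.mp (h.1 hxK hyK hxy)
  set S := utterSupport G x ∪ utterSupport G y
  have hS : ∀ z ∈ S, z ∉ G.commonNeighbors u v := by
    rintro z (hz | hz) ⟨hzu, hzv⟩
    · exact (hxu z hz).2 hzu
    · exact (hyv z hz).2 hzv
  have huS : u ∉ S := by
    rintro (hu | hu)
    · exact (hxu u hu).1 rfl
    · exact (hyv u hu).2 hadj.symm
  have hvS : v ∉ S := by
    rintro (hv | hv)
    · exact (hxu v hv).2 hadj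
    · exact (hyv v hv).1 rfl
  refine hG.not_reachable_induce hadj hS huS hvS (a := ⟨b, Or.inr hby⟩) (b := ⟨a, Or.inl hax⟩)
    hub hva.symm ?_
  exact (reachable_induce_of_eq_or_adj (eq_or_adj_of_mem_utterSupport hby hqy)).trans <|
    (reachable_induce_of_eq_or_adj (S := S) (a := ⟨q, Or.inr hqy⟩) (b := ⟨p, Or.inl hpx⟩)
      (hpq.imp Eq.symm SimpleGraph.Adj.symm)).trans <|
    reachable_induce_of_eq_or_adj (eq_or_adj_of_mem_utterSupport hpx hax)

theorem mem_of_endpoint_mem (h : IsMaxUtterClique G W F) {e : G.edgeSet} {w : α} (hw : w ∈ W)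
    (hwe : w ∈ (e : Sym2 α)) : e ∈ F := by
  by_contra he
  apply h.2.2 e he
  rw [IsUtterClique, coe_insert, Set.image_insert_eq, Set.union_insert,
    SimpleGraph.isClique_insert]
  refine ⟨h.1, fun x hx hne => ?_⟩
  by_cases hxw : x = Sum.inl w
  · subst hxw
    exact utter_adj_iff.mpr ⟨hne, w, hwe, w, rfl, Or.inl rfl⟩
  · exact utter_adj_of_subset (h.1 (Or.inl ⟨w, hw, rfl⟩) hx (Ne.symm hxw))
      (Set.singleton_subset_iff.mpr hwe) hne

end IsMaxUtterClique

theorem mem_edgesIn_union_edgesCut {G : SimpleGraph V} {W : Finset V} {e : G.edgeSet} :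
    e ∈ edgesIn G W ∪ edgesCut G W ↔ ∃ w ∈ (e : Sym2 V), w ∈ W := by
  simp only [edgesIn, edgesCut, mem_union, mem_filter, mem_univ, true_and]
  refine ⟨fun h => h.elim (fun h => ⟨_, Sym2.out_fst_mem _, h _ (Sym2.out_fst_mem _)⟩) And.left,
    fun h => ?_⟩
  by_cases hall : ∀ w ∈ (e : Sym2 V), w ∈ W
  · exact Or.inl hall
  · push Not at hall
    exact Or.inr ⟨h, hall⟩

theorem stmt4_general (G : SimpleGraph V) (hch : Chordal G)
    (W : Finset V) (F : Finset G.edgeSet) (h : IsMaxUtterClique G W F) :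
    F = edgesIn G W ∪ edgesCut G W ∧ F ∩ edgesOut G W = ∅ := by
  have hF : ∀ e, e ∈ F ↔ ∃ w ∈ (e : Sym2 V), w ∈ W := fun e =>
    ⟨h.exists_endpoint_mem_of_mem hch, fun ⟨_, hwe, hw⟩ => h.mem_of_endpoint_mem hw hwe⟩
  refine ⟨?_, ?_⟩
  · ext e
    rw [hF, mem_edgesIn_union_edgesCut]
  · ext e
    simp [edgesOut, hF]

/-- In a connected chordal graph, every maximal utter clique
[W,F] satisfies F = E(W) ∪ δ(W); in particular no edge of F has both
endpoints outside W. -/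
theorem stmt4 (G : SimpleGraph V) (hconn : G.Connected) (hch : Chordal G)
    (W : Finset V) (F : Finset G.edgeSet) (h : IsMaxUtterClique G W F) :
    F = edgesIn G W ∪ edgesCut G W ∧ F ∩ edgesOut G W = ∅ :=
  stmt4_general G hch W F h
end
end

section
/- Let G=(V,E) be a finite simple graph, w ∈ V, and W ⊆ N(w) with |W| ≥ 2. The inequality x(W) + (α₂(G[W]) − 1)·x_w ≤ α₂(G[W]) is valid for the co-2-plex polytope P(G), and it defines a facet of P(G) if and only if both of the following hold: (i) no vertex u ∈ V ∖ (W ∪ {w}) is adjacent to every vertex of W; (ii) for every v ∈ N(w) ∖ W, α₂(G[W ∪ {v}]) = α₂(G[W]) + 1. -/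
open Finset
open scoped Classical

noncomputable section

variable {V : Type*} [Fintype V]

/-!
A co-2-plex containing `w` meets `W ⊆ N(w)` in at most one vertex, and one avoiding `w` meets it
in at most `α₂(G[W])` vertices; this gives validity. If (i) fails for `u`, or (ii) fails for `v`,
then `u` (resp. `v`) lies in no tight co-2-plex, so the face also lies in the hyperplane `x_u = 0`
(resp. `x_v = 0`) and has dimension at most `|V| - 2`. Conversely, under (i) and (ii) the tight
co-2-plexes `{w, i}` for `i ∈ W`, a maximum co-2-plex of `G[W]`, a maximum co-2-plex of
`G[W ∪ {u}]` for `u ∈ N(w) ∖ W`, and `{u, w, v}` with `v ∈ W ∖ N(u)` for the other `u` have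
affinely independent incidence vectors.
-/

section Convexity

theorem LinearMap.apply_eq_zero_of_mem_convexHull {𝕜 E : Type*} [Field 𝕜] [LinearOrder 𝕜]
    [IsStrictOrderedRing 𝕜] [AddCommGroup E] [Module 𝕜 E] {ℓ g : E →ₗ[𝕜] 𝕜} {X : Set E} {c : 𝕜}
    (hle : ∀ y ∈ X, ℓ y ≤ c) (hg : ∀ y ∈ X, ℓ y = c → g y = 0) {x : E}
    (hx : x ∈ convexHull 𝕜 X) (hxc : ℓ x = c) : g x = 0 := by
  obtain ⟨ι, _, t, z, ht₀, ht₁, hz, rfl⟩ := mem_convexHull_iff_exists_fintype.1 hx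
  -- a convex combination attaining `c` puts weight only on points where `ℓ` attains `c`
  have hslack : ∀ i, t i * (c - ℓ (z i)) = 0 := by
    have hsum : ∑ i, t i * (c - ℓ (z i)) = 0 := by
      simp only [mul_sub, Finset.sum_sub_distrib, ← Finset.sum_mul, ht₁, one_mul, sub_eq_zero]
      simpa only [map_sum, map_smul, smul_eq_mul] using hxc.symm
    intro i
    exact (Finset.sum_eq_zero_iff_of_nonneg fun i _ =>
      mul_nonneg (ht₀ i) (sub_nonneg.2 (hle _ (hz i)))).1 hsum i (mem_univ i)
  simp only [map_sum, map_smul, smul_eq_mul]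
  refine Finset.sum_eq_zero fun i _ => ?_
  rcases mul_eq_zero.1 (hslack i) with h | h
  · rw [h, zero_mul]
  · rw [hg _ (hz i) (sub_eq_zero.1 h).symm, mul_zero]

theorem AffineIndependent.card_add_finrank_le {k E F ι : Type*} [DivisionRing k] [AddCommGroup E]
    [Module k E] [FiniteDimensional k E] [AddCommGroup F] [Module k F] [Fintype ι] [Nonempty ι]
    {f : ι → E} (hf : AffineIndependent k f) {Φ : E →ₗ[k] F} (hΦ : Function.Surjective Φ)
    {y : F} (hfy : ∀ i, Φ (f i) = y) :
    Fintype.card ι + Module.finrank k F ≤ Module.finrank k E + 1 := by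
  have hspan : vectorSpan k (Set.range f) ≤ LinearMap.ker Φ := by
    rw [vectorSpan_def, Submodule.span_le]
    rintro _ ⟨_, ⟨i, rfl⟩, _, ⟨j, rfl⟩, rfl⟩
    simp [hfy]
  have hrank := Φ.finrank_range_add_finrank_ker
  rw [LinearMap.range_eq_top.2 hΦ, finrank_top] at hrank
  have := Submodule.finrank_mono hspan
  have := hf.finrank_vectorSpan_add_one
  omega

variable {ι : Type*} [Fintype ι]

theorem sum_mul_le_of_mem_convexHull {X : Set (ι → ℝ)} {a : ι → ℝ} {c : ℝ}
    (h : ∀ y ∈ X, ∑ v, a v * y v ≤ c) : ∀ x ∈ convexHull ℝ X, ∑ v, a v * x v ≤ c :=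
  fun _ hx => convexHull_min h (convex_halfSpace_le (dotProductBilin ℝ ℝ a).isLinear c) hx

theorem not_isFacet_convexHull {X : Set (ι → ℝ)} {a : ι → ℝ} {c : ℝ} {z v₀ : ι}
    (hv₀ : a v₀ ≠ 0) (hne : v₀ ≠ z) (hz : a z = 0)
    (htight : ∀ y ∈ X, ∑ v, a v * y v = c → y z = 0) :
    ¬ IsFacet (convexHull ℝ X) a c := by
  rintro ⟨hvalid, f, hf, hfP⟩
  let ℓ := dotProductBilin ℝ ℝ a
  have hfz : ∀ i, f i z = 0 := fun i =>
    ℓ.apply_eq_zero_of_mem_convexHull (g := LinearMap.proj z)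
      (fun y hy => hvalid y (subset_convexHull ℝ X hy)) htight (hfP i).1 (hfP i).2
  -- `ℓ` and `x ↦ x z` are independent, so the points `f i` lie in a subspace of codimension 2
  let Φ := ℓ.prod (LinearMap.proj z)
  have hΦ : Function.Surjective Φ := by
    rintro ⟨s, t⟩
    refine ⟨Pi.single v₀ (s / a v₀) + Pi.single z t, Prod.ext ?_ ?_⟩
    · simp [Φ, ℓ, dotProduct_add, dotProduct_single, hz, mul_div_cancel₀ _ hv₀]
    · simp [Φ, hne]
  have : Nonempty (Fin (Fintype.card ι)) := ⟨⟨0, Fintype.card_pos_iff.2 ⟨z⟩⟩⟩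
  have := hf.card_add_finrank_le hΦ (y := (c, 0)) fun i => Prod.ext (hfP i).2 (hfz i)
  simp [Module.finrank_fintype_fun_eq_card] at this

theorem isFacet_of_affineIndependent {P : Set (ι → ℝ)} {a : ι → ℝ} {c : ℝ}
    (hvalid : ∀ x ∈ P, ∑ v, a v * x v ≤ c) {f : ι → ι → ℝ} (hf : AffineIndependent ℝ f)
    (hfP : ∀ i, f i ∈ P ∧ ∑ v, a v * f i v = c) : IsFacet P a c :=
  ⟨hvalid, f ∘ (Fintype.equivFin ι).symm,
    hf.comp_embedding (Fintype.equivFin ι).symm.toEmbedding, fun _ => hfP _⟩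

end Convexity

section Co2Plex

variable {α : Type*} {G : SimpleGraph α} {S T : Finset α} {r u x y : α}

theorem IsCo2Plex.subset (hS : IsCo2Plex G S) (hTS : T ⊆ S) : IsCo2Plex G T := fun u hu =>
  (card_le_card (filter_subset_filter _ hTS)).trans (hS u (hTS hu))

theorem IsCo2Plex.eq_of_adj (hS : IsCo2Plex G S) (hu : u ∈ S) (hx : x ∈ S) (hy : y ∈ S)
    (hux : G.Adj u x) (huy : G.Adj u y) : x = y :=
  card_le_one.1 (hS u hu) x (mem_filter.2 ⟨hx, hux⟩) y (mem_filter.2 ⟨hy, huy⟩)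

theorem IsCo2Plex.card_inter_le_one (hS : IsCo2Plex G S) (hu : u ∈ S)
    (hT : ∀ v ∈ T, G.Adj u v) : (T ∩ S).card ≤ 1 :=
  card_le_one.2 fun _ hx _ hy => hS.eq_of_adj hu (mem_inter.1 hx).2 (mem_inter.1 hy).2
    (hT _ (mem_inter.1 hx).1) (hT _ (mem_inter.1 hy).1)

theorem isCo2Plex_of_card_le_two (h : S.card ≤ 2) : IsCo2Plex G S := by
  intro u hu
  have hsub : (S.filter fun v => G.Adj u v) ⊆ S.erase u := fun v hv =>
    mem_erase.2 ⟨(G.ne_of_adj (mem_filter.1 hv).2).symm, (mem_filter.1 hv).1⟩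
  have := card_le_card hsub
  rw [card_erase_of_mem hu] at this
  omega

theorem IsCo2Plex.insert (hS : IsCo2Plex G S) (hr : ∀ v ∈ S, ¬ G.Adj r v) :
    IsCo2Plex G (insert r S) := by
  intro u hu
  rw [filter_insert]
  rcases mem_insert.1 hu with rfl | hu
  · simp [filter_eq_empty_iff.2 hr]
  · rw [if_neg fun h => hr u hu h.symm]
    exact hS u hu

end Co2Plex

section StarTight

variable {α : Type*} {G : SimpleGraph α} {W S : Finset α} {w u v : α} {n : ℕ}

theorem sum_chiV (W S : Finset α) : ∑ v ∈ W, chiV S v = ((W ∩ S).card : ℝ) := by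
  simp only [chiV, sum_boole, filter_mem_eq_inter]

def starCoeff (W : Finset α) (w : α) (β : ℝ) : α → ℝ :=
  fun v => if v ∈ W then 1 else if v = w then β else 0

def StarTight (W : Finset α) (w : α) (n : ℕ) (S : Finset α) : Prop :=
  (w ∈ S ∧ (W ∩ S).card = 1) ∨ (w ∉ S ∧ (W ∩ S).card = n)

theorem starTight_iff :
    ((W ∩ S).card : ℝ) + ((n : ℝ) - 1) * chiV S w = n ↔ StarTight W w n S := by
  by_cases hw : w ∈ S <;> simp [StarTight, chiV, hw]
  constructor <;> intro h
  · exact_mod_cast (by linarith : ((W ∩ S).card : ℝ) = 1)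
  · simp [h]

theorem starTight_pair (hwW : w ∉ W) (hv : v ∈ W) : StarTight W w n {w, v} :=
  Or.inl ⟨mem_insert_self w {v}, card_eq_one.2 ⟨v, by grind⟩⟩

theorem StarTight.notMem_of_forall_adj (ht : StarTight W w n S) (hS : IsCo2Plex G S) (hn : 2 ≤ n)
    (hW : ∀ v ∈ W, G.Adj w v) (huw : u ≠ w) (hu : ∀ v ∈ W, G.Adj u v) : u ∉ S := by
  intro huS
  rcases ht with ⟨hwS, hcard⟩ | ⟨-, hcard⟩
  · obtain ⟨v, hv⟩ := card_eq_one.1 hcard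
    obtain ⟨hvW, hvS⟩ := mem_inter.1 (hv ▸ mem_singleton_self v)
    exact huw (hS.eq_of_adj hvS huS hwS (hu v hvW).symm (hW v hvW).symm)
  · have := hS.card_inter_le_one huS hu
    omega

theorem exists_starTight_of_not_adj (hW : ∀ v ∈ W, G.Adj w v) (hwu : ¬ G.Adj w u)
    (hu : ¬ ∀ v ∈ W, G.Adj u v) :
    ∃ S, IsCo2Plex G S ∧ StarTight W w n S ∧ u ∈ S ∧ S ⊆ insert u (insert w W) := by
  obtain ⟨v, hvW, huv⟩ : ∃ v ∈ W, ¬ G.Adj u v := by simpa using hu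
  have hwW : w ∉ W := fun h => (hW w h).ne rfl
  have huW : u ∉ W := fun h => hwu (hW u h)
  refine ⟨{u, w, v}, (isCo2Plex_of_card_le_two card_le_two).insert ?_, Or.inl ⟨by simp, ?_⟩,
    by simp, ?_⟩
  · simpa [huv] using fun h : G.Adj u w => hwu h.symm
  · exact card_eq_one.2 ⟨v, by grind⟩
  · grind

end StarTight

section Co2PlexNumber

variable {G : SimpleGraph V} {S W W' : Finset V} {v : V}

theorem card_le_co2plexNumOn (hSW : S ⊆ W) (hS : IsCo2Plex G S) :
    S.card ≤ co2plexNumOn G W := by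
  have := le_sup (f := fun S : Finset V => if S ⊆ W ∧ IsCo2Plex G S then S.card else 0)
    (mem_univ S)
  rwa [if_pos ⟨hSW, hS⟩] at this

theorem co2plexNumOn_le {m : ℕ} (h : ∀ S ⊆ W, IsCo2Plex G S → S.card ≤ m) :
    co2plexNumOn G W ≤ m :=
  Finset.sup_le fun S _ => by
    split_ifs with hS
    exacts [h S hS.1 hS.2, Nat.zero_le m]

theorem exists_isCo2Plex_card_eq_co2plexNumOn (G : SimpleGraph V) (W : Finset V) :
    ∃ S ⊆ W, IsCo2Plex G S ∧ S.card = co2plexNumOn G W := by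
  obtain ⟨S, -, hS⟩ := exists_mem_eq_sup (univ : Finset (Finset V)) univ_nonempty
    (fun S : Finset V => if S ⊆ W ∧ IsCo2Plex G S then S.card else 0)
  by_cases h : S ⊆ W ∧ IsCo2Plex G S
  · exact ⟨S, h.1, h.2, by rw [co2plexNumOn, hS, if_pos h]⟩
  · exact ⟨∅, empty_subset _, fun u hu => absurd hu (notMem_empty u),
      by rw [card_empty, co2plexNumOn, hS, if_neg h]⟩

theorem co2plexNumOn_mono (h : W ⊆ W') : co2plexNumOn G W ≤ co2plexNumOn G W' :=
  co2plexNumOn_le fun _ hS hSc => card_le_co2plexNumOn (hS.trans h) hSc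

theorem co2plexNumOn_insert_le : co2plexNumOn G (insert v W) ≤ co2plexNumOn G W + 1 :=
  co2plexNumOn_le fun S hS hSc => by
    have := card_le_co2plexNumOn (subset_insert_iff.1 hS) (hSc.subset (erase_subset v S))
    have := pred_card_le_card_erase (s := S) (a := v)
    omega

theorem two_le_co2plexNumOn (h : 2 ≤ W.card) : 2 ≤ co2plexNumOn G W := by
  obtain ⟨T, hTW, hT⟩ := exists_subset_card_eq h
  exact hT ▸ card_le_co2plexNumOn hTW (isCo2Plex_of_card_le_two hT.le)

end Co2PlexNumber

section StarInequality

variable {W : Finset V} {w : V}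

theorem sum_starCoeff_mul (hwW : w ∉ W) (β : ℝ) (x : V → ℝ) :
    ∑ v, starCoeff W w β v * x v = ∑ v ∈ W, x v + β * x w := by
  simp [starCoeff, ite_mul, sum_ite, hwW]

theorem sum_starCoeff_mul_chiV (hwW : w ∉ W) (β : ℝ) (S : Finset V) :
    ∑ v, starCoeff W w β v * chiV S v = (W ∩ S).card + β * chiV S w := by
  rw [sum_starCoeff_mul hwW, sum_chiV]

/-- Read a vanishing affine combination at the coordinates outside `W ∪ {w}` first, then at `w`,
then in `W`. -/
theorem affineIndependent_chiV (hwW : w ∉ W) {R : V → Finset V}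
    (hRW : ∀ i ∈ W, R i = {w, i}) (hRw : R w ⊆ W)
    (hRO : ∀ i, i ∉ W → i ≠ w → i ∈ R i ∧ R i ⊆ insert i (insert w W)) :
    AffineIndependent ℝ fun i => chiV (R i) := by
  have hout : ∀ u i, u ∉ W → u ≠ w → (u ∈ R i ↔ i = u) := by
    intro u i huW huw
    by_cases hiW : i ∈ W
    · grind [hRW i hiW]
    by_cases hiw : i = w
    · subst hiw
      exact iff_of_false (fun h => huW (hRw h)) (Ne.symm huw)
    exact ⟨fun hu => by grind [hRO i hiW hiw], fun h => h ▸ (hRO i hiW hiw).1⟩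
  rw [affineIndependent_iff_of_fintype]
  intro c hc hcomb
  rw [Finset.weightedVSub_eq_linear_combination _ hc] at hcomb
  have hcoord : ∀ y, ∑ i, c i * chiV (R i) y = 0 := fun y => by
    simpa using congrFun hcomb y
  have hcO : ∀ u, u ∉ W → u ≠ w → c u = 0 := fun u huW huw => by
    simpa [chiV, hout u _ huW huw] using hcoord u
  have hsum : ∀ F : V → ℝ, ∑ i, c i * F i = c w * F w + ∑ i ∈ W, c i * F i := by
    intro F
    rw [← sum_subset (subset_univ (insert w W)), sum_insert hwW]
    intro i _ hi
    rw [mem_insert, not_or] at hi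
    rw [hcO i hi.2 hi.1, zero_mul]
  have hcw : c w = 0 := by
    have h := hcoord w
    have hW1 : ∀ i ∈ W, c i * chiV (R i) w = c i := fun i hi => by
      rw [hRW i hi, chiV, if_pos (mem_insert_self w {i}), mul_one]
    rw [hsum, chiV, if_neg fun h => hwW (hRw h), sum_congr rfl hW1] at h
    have h1 := hsum fun _ => 1
    simp only [mul_one] at h1
    linarith
  intro v
  by_cases hvW : v ∈ W
  · have h := hcoord v
    rw [hsum, hcw, zero_mul, zero_add] at h
    rwa [sum_eq_single v (fun i hi hiv => by simp [hRW i hi, chiV]; grind) (absurd hvW),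
      hRW v hvW, chiV, if_pos (by simp), mul_one] at h
  by_cases hvw : v = w
  · exact hvw ▸ hcw
  exact hcO v hvW hvw

end StarInequality

section StarFacet

variable {G : SimpleGraph V} {W S : Finset V} {w u v : V}

theorem IsCo2Plex.card_inter_add_mul_chiV_le (hW : ∀ v ∈ W, G.Adj w v) (hS : IsCo2Plex G S) :
    ((W ∩ S).card : ℝ) + ((co2plexNumOn G W : ℝ) - 1) * chiV S w ≤ co2plexNumOn G W := by
  by_cases hwS : w ∈ S
  · have : ((W ∩ S).card : ℝ) ≤ 1 := by exact_mod_cast hS.card_inter_le_one hwS hW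
    simp only [chiV, if_pos hwS]
    linarith
  · have : (W ∩ S).card ≤ co2plexNumOn G W :=
      card_le_co2plexNumOn inter_subset_left (hS.subset inter_subset_right)
    simp only [chiV, if_neg hwS, mul_zero, add_zero]
    exact_mod_cast this

theorem sum_starCoeff_mul_le (hW : ∀ v ∈ W, G.Adj w v) :
    ∀ x ∈ co2PlexPolytope G,
      ∑ v, starCoeff W w ((co2plexNumOn G W : ℝ) - 1) v * x v ≤ co2plexNumOn G W :=
  sum_mul_le_of_mem_convexHull <| by
    rintro _ ⟨S, hS, rfl⟩
    rw [sum_starCoeff_mul_chiV fun h => (hW w h).ne rfl]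
    exact hS.card_inter_add_mul_chiV_le hW

theorem StarTight.notMem_of_co2plexNumOn_insert_le (ht : StarTight W w (co2plexNumOn G W) S)
    (hS : IsCo2Plex G S) (hW : ∀ v ∈ W, G.Adj w v) (hwv : G.Adj w v) (hvW : v ∉ W)
    (hle : co2plexNumOn G (insert v W) ≤ co2plexNumOn G W) : v ∉ S := by
  intro hvS
  have hcard : (insert v (W ∩ S)).card = (W ∩ S).card + 1 :=
    card_insert_of_notMem fun h => hvW (mem_inter.1 h).1
  have hsub : insert v (W ∩ S) ⊆ insert v W ∩ S :=
    insert_subset (mem_inter.2 ⟨mem_insert_self v W, hvS⟩)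
      (inter_subset_inter_right (subset_insert v W))
  rcases ht with ⟨hwS, hcard'⟩ | ⟨-, hcard'⟩
  · have := hS.card_inter_le_one hwS ((forall_mem_insert _ _ _).2 ⟨hwv, hW⟩)
    have := card_le_card hsub
    omega
  · have := card_le_co2plexNumOn (hsub.trans inter_subset_left)
      (hS.subset (hsub.trans inter_subset_right))
    omega

theorem not_isFacet_star_of_forall_notMem (hW : ∀ v ∈ W, G.Adj w v) (hWne : W.Nonempty)
    (huW : u ∉ W) (huw : u ≠ w)
    (h : ∀ S, IsCo2Plex G S → StarTight W w (co2plexNumOn G W) S → u ∉ S) :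
    ¬ IsFacet (co2PlexPolytope G) (starCoeff W w ((co2plexNumOn G W : ℝ) - 1))
      (co2plexNumOn G W) := by
  obtain ⟨v₀, hv₀⟩ := hWne
  refine not_isFacet_convexHull (v₀ := v₀) (by simp [starCoeff, hv₀])
    (ne_of_mem_of_not_mem hv₀ huW) (by simp [starCoeff, huW, huw]) ?_
  rintro _ ⟨S, hS, rfl⟩ ht
  rw [sum_starCoeff_mul_chiV (fun h => (hW w h).ne rfl), starTight_iff] at ht
  simp [chiV, h S hS ht]

theorem exists_starTight_of_adj (hW : ∀ v ∈ W, G.Adj w v) (hwu : G.Adj w u) (huW : u ∉ W)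
    (hu : co2plexNumOn G (insert u W) = co2plexNumOn G W + 1) :
    ∃ S, IsCo2Plex G S ∧ StarTight W w (co2plexNumOn G W) S ∧ u ∈ S ∧
      S ⊆ insert u (insert w W) := by
  obtain ⟨S, hSsub, hS, hcard⟩ := exists_isCo2Plex_card_eq_co2plexNumOn G (insert u W)
  have huS : u ∈ S := by
    by_contra huS
    have := card_le_co2plexNumOn ((subset_insert_iff_of_notMem huS).1 hSsub) hS
    omega
  have hwS : w ∉ S := fun h => (mem_insert.1 (hSsub h)).elim hwu.ne fun h => (hW w h).ne rfl
  refine ⟨S, hS, Or.inr ⟨hwS, ?_⟩, huS,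
    hSsub.trans (insert_subset_insert u (subset_insert w W))⟩
  have : W ∩ S = S.erase u := by
    ext x
    have := @hSsub x
    grind
  rw [this, card_erase_of_mem huS]
  omega

theorem isFacet_star (hW : ∀ v ∈ W, G.Adj w v)
    (hi : ∀ u, u ∉ W → u ≠ w → ¬ ∀ v ∈ W, G.Adj u v)
    (hii : ∀ v, G.Adj w v → v ∉ W → co2plexNumOn G (insert v W) = co2plexNumOn G W + 1) :
    IsFacet (co2PlexPolytope G) (starCoeff W w ((co2plexNumOn G W : ℝ) - 1))
      (co2plexNumOn G W) := by
  have hwW : w ∉ W := fun h => (hW w h).ne rfl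
  have hroot : ∀ i, ∃ S, IsCo2Plex G S ∧ StarTight W w (co2plexNumOn G W) S ∧
      (i ∈ W → S = {w, i}) ∧ (i = w → S ⊆ W) ∧
      (i ∉ W → i ≠ w → i ∈ S ∧ S ⊆ insert i (insert w W)) := by
    intro i
    by_cases hiW : i ∈ W
    · exact ⟨{w, i}, isCo2Plex_of_card_le_two card_le_two, starTight_pair hwW hiW,
        fun _ => rfl, fun h => absurd (h ▸ hiW) hwW, fun h => absurd hiW h⟩
    by_cases hiw : i = w
    · obtain ⟨S, hSW, hS, hcard⟩ := exists_isCo2Plex_card_eq_co2plexNumOn G W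
      exact ⟨S, hS, Or.inr ⟨fun h => hwW (hSW h), by rw [inter_eq_right.2 hSW, hcard]⟩,
        fun h => absurd h hiW, fun _ => hSW, fun _ h => absurd hiw h⟩
    obtain ⟨S, hS, ht, hiS, hSsub⟩ :
        ∃ S, IsCo2Plex G S ∧ StarTight W w (co2plexNumOn G W) S ∧ i ∈ S ∧
          S ⊆ insert i (insert w W) := by
      by_cases hwi : G.Adj w i
      · exact exists_starTight_of_adj hW hwi hiW (hii i hwi hiW)
      · exact exists_starTight_of_not_adj hW hwi (hi i hiW hiw)
    exact ⟨S, hS, ht, fun h => absurd h hiW, fun h => absurd h hiw, fun _ _ => ⟨hiS, hSsub⟩⟩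
  choose R hRc hRt hRW hRw hRO using hroot
  refine isFacet_of_affineIndependent (sum_starCoeff_mul_le hW)
    (affineIndependent_chiV hwW hRW (hRw w rfl) hRO) fun i =>
      ⟨subset_convexHull ℝ _ ⟨R i, hRc i, rfl⟩, ?_⟩
  rw [sum_starCoeff_mul_chiV hwW, starTight_iff]
  exact hRt i

end StarFacet

/-- Validity and facet characterization of the inequality
x(W) + (α₂(G[W]) − 1)·x_w ≤ α₂(G[W]) for W ⊆ N(w), |W| ≥ 2. -/
theorem stmt6 (G : SimpleGraph V) [DecidableRel G.Adj] (w : V) (W : Finset V)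
    (hW : W ⊆ G.neighborFinset w) (hcard : 2 ≤ W.card) :
    (∀ x ∈ co2PlexPolytope G,
        ∑ v ∈ W, x v + ((co2plexNumOn G W : ℝ) - 1) * x w ≤ (co2plexNumOn G W : ℝ)) ∧
      (IsFacet (co2PlexPolytope G)
          (fun v => if v ∈ W then 1 else if v = w then (co2plexNumOn G W : ℝ) - 1 else 0)
          (co2plexNumOn G W : ℝ) ↔
        ((∀ u : V, u ∉ W → u ≠ w → ¬ ∀ v ∈ W, G.Adj u v) ∧
          ∀ v : V, G.Adj w v → v ∉ W →
            co2plexNumOn G (insert v W) = co2plexNumOn G W + 1)) := by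
  have hadj : ∀ v ∈ W, G.Adj w v := fun v hv => (G.mem_neighborFinset w v).1 (hW hv)
  have hwW : w ∉ W := fun h => (hadj w h).ne rfl
  have hWne : W.Nonempty := card_pos.1 (by omega)
  have htwo : 2 ≤ co2plexNumOn G W := two_le_co2plexNumOn hcard
  change _ ∧ (IsFacet _ (starCoeff W w _) _ ↔ _)
  refine ⟨fun x hx => ?_, fun hfac => ⟨?_, ?_⟩,
    fun ⟨hi, hii⟩ => isFacet_star hadj hi hii⟩
  · rw [← sum_starCoeff_mul hwW]
    exact sum_starCoeff_mul_le hadj x hx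
  · intro u huW huw hu
    exact not_isFacet_star_of_forall_notMem hadj hWne huW huw
      (fun S hS ht => ht.notMem_of_forall_adj hS htwo hadj huw hu) hfac
  · intro v hwv hvW
    by_contra hne
    have hle : co2plexNumOn G (insert v W) ≤ co2plexNumOn G W := by
      have := co2plexNumOn_insert_le (G := G) (v := v) (W := W)
      have := co2plexNumOn_mono (G := G) (subset_insert v W)
      omega
    exact not_isFacet_star_of_forall_notMem hadj hWne hvW hwv.ne'
      (fun S hS ht => ht.notMem_of_co2plexNumOn_insert_le hS hadj hwv hvW hle) hfac

end
end
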